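/- (Leave-one-out cross-validation shortcut, equation (5.3).) Let n ≥ 2, let Φ be an n×n real symmetric positive definite matrix with Q = Φ⁻¹, let Y ∈ ℝⁿ and μ ∈ ℝⁿ. Fix an index i, and let Σ be the (n−1)×(n−1) principal submatrix of Φ obtained by deleting row i and column i, let c ∈ ℝ^{n-1} be column i of Φ with its i-th entry deleted, and let Y_{-i}, μ_{-i} be Y, μ with their i-th entries deleted. Then Q_{ii} > 0 and the leave-one-out conditional mean satisfies μ_i + cᵀ Σ⁻¹ (Y_{-i} − μ_{-i}) = μ_i − (1/Q_{ii}) ∑_{j ≠ i} Q_{ij} (Y_j − μ_j). -/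

import Mathlib

/-!
Row `i` of `Q Φ = 1`, read off at the columns `k ≠ i`, says that the row `r = (Q i j)_{j ≠ i}`
satisfies `r Σ = -Q i i • cᵀ`. Hence `cᵀ Σ⁻¹ = -r / Q i i`, which turns the leave-one-out
conditional mean into the stated formula; `Q i i > 0` because `Q` is again positive definite.
-/

open Matrix

namespace Matrix

variable {n : ℕ}

theorem vecMul_submatrix_succAbove_of_mul_eq_one {R : Type*} [Ring R]
    {Q Φ : Matrix (Fin (n + 1)) (Fin (n + 1)) R} (h : Q * Φ = 1) (i : Fin (n + 1)) :
    (fun j => Q i (i.succAbove j)) ᵥ* Φ.submatrix i.succAbove i.succAbove =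
      -Q i i • fun k => Φ i (i.succAbove k) := by
  funext k
  have hrow : ∑ j, Q i j * Φ j (i.succAbove k) = 0 := by
    rw [← mul_apply, h, one_apply_ne (i.succAbove_ne k).symm]
  rw [Fin.sum_univ_succAbove _ i, add_eq_zero_iff_eq_neg'] at hrow
  simpa [vecMul, dotProduct] using hrow

theorem mul_dotProduct_submatrix_inv_mulVec_of_mul_eq_one {R : Type*} [CommRing R]
    {Q Φ : Matrix (Fin (n + 1)) (Fin (n + 1)) R} (h : Q * Φ = 1) (i : Fin (n + 1))
    (hS : IsUnit (Φ.submatrix i.succAbove i.succAbove).det) (v : Fin n → R) :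
    Q i i * ((fun k => Φ i (i.succAbove k)) ⬝ᵥ (Φ.submatrix i.succAbove i.succAbove)⁻¹ *ᵥ v) =
      -∑ j, Q i (i.succAbove j) * v j := by
  have hr : (fun j => Q i (i.succAbove j)) =
      (-Q i i • fun k => Φ i (i.succAbove k)) ᵥ* (Φ.submatrix i.succAbove i.succAbove)⁻¹ := by
    rw [← vecMul_submatrix_succAbove_of_mul_eq_one h i, vecMul_vecMul, mul_nonsing_inv _ hS,
      vecMul_one]
  change _ = -((fun j => Q i (i.succAbove j)) ⬝ᵥ v)
  rw [hr, ← dotProduct_mulVec, neg_smul, neg_dotProduct, smul_dotProduct, smul_eq_mul, neg_neg]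

end Matrix

theorem Fin.sum_univ_erase_eq_sum_succAbove {M : Type*} [AddCommMonoid M] {n : ℕ}
    (f : Fin (n + 1) → M) (i : Fin (n + 1)) :
    ∑ j ∈ Finset.univ.erase i, f j = ∑ j, f (i.succAbove j) := by
  rw [← Finset.sum_image (fun a _ b _ h => Fin.succAbove_right_injective h),
    Fin.image_succAbove_univ, Finset.erase_eq]
  rfl

theorem stmt4_general (n : ℕ)
    (Φ : Matrix (Fin (n + 1)) (Fin (n + 1)) ℝ)
    (hΦ : Φ.PosDef) (Q : Matrix (Fin (n + 1)) (Fin (n + 1)) ℝ) (hQ : Q = Φ⁻¹)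
    (Y μ : Fin (n + 1) → ℝ) (i : Fin (n + 1))
    (S : Matrix (Fin n) (Fin n) ℝ)
    (hS : S = Φ.submatrix i.succAbove i.succAbove)
    (c : Fin n → ℝ) (hc : c = fun j => Φ (i.succAbove j) i) :
    0 < Q i i ∧
      μ i + c ⬝ᵥ S⁻¹ *ᵥ (Y ∘ i.succAbove - μ ∘ i.succAbove) =
        μ i - (1 / Q i i) * ∑ j ∈ Finset.univ.erase i, Q i j * (Y j - μ j) := by
  have hQii : 0 < Q i i := hQ ▸ hΦ.inv.diag_pos
  have hQΦ : Q * Φ = 1 := hQ ▸ nonsing_inv_mul Φ ((isUnit_iff_isUnit_det Φ).mp hΦ.isUnit)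
  have hSdet : IsUnit (Φ.submatrix i.succAbove i.succAbove).det :=
    (isUnit_iff_isUnit_det _).mp (hΦ.submatrix Fin.succAbove_right_injective).isUnit
  have hc_row : c = fun j => Φ i (i.succAbove j) := by
    rw [hc]; funext j; exact hΦ.isHermitian.apply _ _
  have key := mul_dotProduct_submatrix_inv_mulVec_of_mul_eq_one hQΦ i hSdet
    (Y ∘ i.succAbove - μ ∘ i.succAbove)
  rw [← hS, ← hc_row] at key
  simp only [Pi.sub_apply, Function.comp_apply] at key
  refine ⟨hQii, ?_⟩
  rw [Fin.sum_univ_erase_eq_sum_succAbove (fun j => Q i j * (Y j - μ j))]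
  field_simp
  linarith

/-- LOOCV shortcut, equation (5.3): for a symmetric positive definite
`Φ` with `Q = Φ⁻¹`, the leave-one-out conditional mean satisfies
`μ_i + cᵀ Σ⁻¹ (Y_{-i} − μ_{-i}) = μ_i − (1/Q_{ii}) ∑_{j ≠ i} Q_{ij}(Y_j − μ_j)`,
where `Σ` is `Φ` with row and column `i` deleted and `c` is column `i` of `Φ`
with entry `i` deleted. -/
theorem stmt4 (n : ℕ) (hn : 1 ≤ n)
    (Φ : Matrix (Fin (n + 1)) (Fin (n + 1)) ℝ) (hΦsymm : Φ.IsSymm)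
    (hΦ : Φ.PosDef) (Q : Matrix (Fin (n + 1)) (Fin (n + 1)) ℝ) (hQ : Q = Φ⁻¹)
    (Y μ : Fin (n + 1) → ℝ) (i : Fin (n + 1))
    (S : Matrix (Fin n) (Fin n) ℝ)
    (hS : S = Φ.submatrix i.succAbove i.succAbove)
    (c : Fin n → ℝ) (hc : c = fun j => Φ (i.succAbove j) i) :
    0 < Q i i ∧
      μ i + c ⬝ᵥ S⁻¹ *ᵥ (Y ∘ i.succAbove - μ ∘ i.succAbove) =
        μ i - (1 / Q i i) * ∑ j ∈ Finset.univ.erase i, Q i j * (Y j - μ j) :=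
  stmt4_general n Φ hΦ Q hQ Y μ i S hS c hc
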